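/- arXiv:2103.04393 — 2 statements merged into one kernel-verified Lean document; each statement's English description precedes it below -/
import Mathlib

section
/- Let k ≥ 1 and n ≥ 1 be integers. If μ(n) > k, then every homogeneous polynomial of degree n in P_k is hit; equivalently, the cohit space (QP_k)_n is the zero vector space. -/
open MvPolynomial

/-- `P k` is the polynomial algebra `𝔽₂[x_1, …, x_k]`, graded by total degree. -/
abbrev P (k : ℕ) := MvPolynomial (Fin k) (ZMod 2)

/-- The total Steenrod square: the `𝔽₂`-algebra endomorphism of `P k` determined by
`Sq (x_j) = x_j + x_j ^ 2`. -/
noncomputable def SqTotal (k : ℕ) : P k →ₐ[ZMod 2] P k :=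
  aeval fun j => X j + X j ^ 2

/-- The space of hit polynomials of degree `n` in `P k`: the `𝔽₂`-linear span of the
degree-`n` homogeneous components of the polynomials `Sq g`, where `g` ranges over the
homogeneous polynomials of degree `< n`. -/
noncomputable def hitSubmodule (k n : ℕ) : Submodule (ZMod 2) (P k) :=
  Submodule.span (ZMod 2)
    {f | ∃ m, m < n ∧ ∃ g ∈ homogeneousSubmodule (Fin k) (ZMod 2) m,
      f = homogeneousComponent n (SqTotal k g)}

/-- The span of homogeneous components of all degrees different from `n`. -/
noncomputable def offDegree (k n : ℕ) : Submodule (ZMod 2) (P k) :=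
  ⨆ (m : ℕ) (_ : m ≠ n), homogeneousSubmodule (Fin k) (ZMod 2) m

/-- The submodule of `P k` by which one quotients to get the cohit space in degree `n`.
Since `P k` is the direct sum of its homogeneous components, the quotient
`P k ⧸ hitTotal k n` is canonically identified with the quotient of the space of
homogeneous polynomials of degree `n` by its subspace of hit polynomials. -/
noncomputable def hitTotal (k n : ℕ) : Submodule (ZMod 2) (P k) :=
  hitSubmodule k n ⊔ offDegree k n

/-- The cohit space `(QP_k)_n = (𝔽₂ ⊗_𝒜 P_k)_n`. -/
abbrev QP (k n : ℕ) := P k ⧸ hitTotal k n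

/-- `μ n`: the smallest `r` such that `n` can be written as a sum
`(2^{u_1} - 1) + ⋯ + (2^{u_r} - 1)` with all `u_i > 0`. -/
noncomputable def mu (n : ℕ) : ℕ :=
  sInf {r : ℕ | ∃ u : Fin r → ℕ, (∀ i, 0 < u i) ∧ n = ∑ i, (2 ^ u i - 1)}

/-- Kameko's map `ψ : P k → P k`, the `𝔽₂`-linear map sending a monomial with all
exponents odd, `x_1^{a_1} ⋯ x_k^{a_k}`, to `x_1^{(a_1-1)/2} ⋯ x_k^{(a_k-1)/2}`, and all
other monomials to `0`. -/
noncomputable def psi (k : ℕ) : P k →ₗ[ZMod 2] P k :=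
  (Finsupp.lsum (ZMod 2) fun a : Fin k →₀ ℕ =>
    if ∀ j, Odd (a j) then monomial (a.mapRange (· / 2) (Nat.zero_div 2)) else 0)
    ∘ₗ (AddMonoidAlgebra.coeffLinearEquiv (ZMod 2)).toLinearMap

/-- `κ : (QP_k)_a → (QP_k)_b` is (induced by) Kameko's squaring operation if it commutes
with `ψ` on classes of homogeneous polynomials of degree `a`. -/
def IsKameko (k a b : ℕ) (κ : QP k a →ₗ[ZMod 2] QP k b) : Prop :=
  ∀ f ∈ homogeneousSubmodule (Fin k) (ZMod 2) a,
    κ ((hitTotal k a).mkQ f) = (hitTotal k b).mkQ (psi k f)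

/-- `P_k^0`: the span of the monomials having at least one exponent equal to zero. -/
noncomputable def P0 (k : ℕ) : Submodule (ZMod 2) (P k) :=
  Submodule.span (ZMod 2)
    {f | ∃ a : Fin k →₀ ℕ, (∃ j, a j = 0) ∧ f = monomial a 1}

/-- `P_k^+`: the span of the monomials with all exponents positive. -/
noncomputable def Pplus (k : ℕ) : Submodule (ZMod 2) (P k) :=
  Submodule.span (ZMod 2)
    {f | ∃ a : Fin k →₀ ℕ, (∀ j, a j ≠ 0) ∧ f = monomial a 1}

/-- `(QP_k^0)_n`: the image in `(QP_k)_n` of the degree-`n` homogeneous part of `P_k^0`. -/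
noncomputable def Q0 (k n : ℕ) : Submodule (ZMod 2) (QP k n) :=
  (P0 k ⊓ homogeneousSubmodule (Fin k) (ZMod 2) n).map (hitTotal k n).mkQ

/-- `(QP_k^+)_n`: the image in `(QP_k)_n` of the degree-`n` homogeneous part of `P_k^+`. -/
noncomputable def Qplus (k n : ℕ) : Submodule (ZMod 2) (QP k n) :=
  (Pplus k ⊓ homogeneousSubmodule (Fin k) (ZMod 2) n).map (hitTotal k n).mkQ

/-- The weight vector of a monomial with exponents `a`:
`wtVec k a i` is the number of variables `x_j` such that the `i`-th binary digit of the
exponent `a j` equals `1` (this is `ω_{i+1}` in the 1-indexed notation of the paper). -/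
def wtVec (k : ℕ) (a : Fin k →₀ ℕ) (i : ℕ) : ℕ :=
  (Finset.univ.filter fun j : Fin k => (a j).testBit i).card

/-- Strict left lexicographic order on weight vectors (as functions `ℕ → ℕ`). -/
def lexLt (u v : ℕ → ℕ) : Prop :=
  ∃ i, (∀ j, j < i → u j = v j) ∧ u i < v i

/-- Left lexicographic order on weight vectors. -/
def lexLe (u v : ℕ → ℕ) : Prop :=
  u = v ∨ lexLt u v

/-- A weight vector `(ω_1, ω_2, …)` given as a list, as a function `ℕ → ℕ`
(0-indexed: the value at `i` is `ω_{i+1}`). -/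
def listToFun (L : List ℕ) : ℕ → ℕ := fun i => L.getD i 0

/-- The degree of a weight vector: `deg ω = ∑_{i ≥ 1} 2^{i-1} ω_i`. -/
def degWeight (L : List ℕ) : ℕ :=
  ∑ i ∈ Finset.range L.length, 2 ^ i * L.getD i 0

/-- `P_k(ω)`: the span of the monomials of degree `deg ω` whose weight vector is `≤ ω`. -/
noncomputable def POmega (k : ℕ) (L : List ℕ) : Submodule (ZMod 2) (P k) :=
  Submodule.span (ZMod 2)
    {f | ∃ a : Fin k →₀ ℕ, (a.sum fun _ e => e) = degWeight L ∧
      lexLe (wtVec k a) (listToFun L) ∧ f = monomial a 1}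

/-- `P_k^-(ω)`: the span of the monomials of degree `deg ω` whose weight vector is `< ω`. -/
noncomputable def POmegaLt (k : ℕ) (L : List ℕ) : Submodule (ZMod 2) (P k) :=
  Submodule.span (ZMod 2)
    {f | ∃ a : Fin k →₀ ℕ, (a.sum fun _ e => e) = degWeight L ∧
      lexLt (wtVec k a) (listToFun L) ∧ f = monomial a 1}

/-- The subspace `(H ∩ P_k(ω)) + P_k^-(ω)` of `P_k(ω)`, where `H` is the space of hit
polynomials of degree `deg ω`. -/
noncomputable def NOmega (k : ℕ) (L : List ℕ) : Submodule (ZMod 2) ↥(POmega k L) :=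
  ((hitSubmodule k (degWeight L) ⊓ POmega k L) ⊔ POmegaLt k L).comap (POmega k L).subtype

/-- `QP_k(ω) = P_k(ω) / ((H ∩ P_k(ω)) + P_k^-(ω))`. -/
abbrev QPOmega (k : ℕ) (L : List ℕ) := ↥(POmega k L) ⧸ NOmega k L

/-- The span of the monomials in `P_k(ω)` all of whose exponents are positive. -/
noncomputable def PplusOmega (k : ℕ) (L : List ℕ) : Submodule (ZMod 2) (P k) :=
  Submodule.span (ZMod 2)
    {f | ∃ a : Fin k →₀ ℕ, (a.sum fun _ e => e) = degWeight L ∧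
      lexLe (wtVec k a) (listToFun L) ∧ (∀ j, a j ≠ 0) ∧ f = monomial a 1}

/-- `QP_k^+(ω)`: the image in `QP_k(ω)` of the span of the monomials in `P_k(ω)` all of
whose exponents are positive. -/
noncomputable def QPplusOmega (k : ℕ) (L : List ℕ) : Submodule (ZMod 2) (QPOmega k L) :=
  (((PplusOmega k L).comap (POmega k L).subtype)).map (NOmega k L).mkQ

/-- The generic degree `k(2^s - 1) + 2^s d`. -/
def degseq (k d s : ℕ) : ℕ := k * (2 ^ s - 1) + 2 ^ s * d

/-- `t(k,d) = max {0, k - α(d+k) - ζ(d+k)}`, where `α` is the number of ones in the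
binary expansion and `ζ` is the 2-adic valuation. -/
def tkd (k d : ℕ) : ℕ :=
  k - ((Nat.digits 2 (d + k)).sum + (d + k).factorization 2)

/-- The `j`-fold composite of a family of maps
`κ s : (QP_k)_{n (s+1)} → (QP_k)_{n s}`, going from `(QP_k)_{n (t+j)}` down to
`(QP_k)_{n t}`. -/
noncomputable def iterComp (k : ℕ) (n : ℕ → ℕ)
    (κ : ∀ s, QP k (n (s + 1)) →ₗ[ZMod 2] QP k (n s)) :
    ∀ t j : ℕ, QP k (n (t + j)) →ₗ[ZMod 2] QP k (n t)
  | _, 0 => LinearMap.id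
  | t, j + 1 => (iterComp k n κ t j).comp (κ (t + j))

/-!
Write a monomial of degree `n` as `x_S · (x^b)²`, where `S` is the set of variables with odd
exponent, so that `n = |S| + 2 deg b`. In characteristic 2, `Sq (x^{2^i}) = x^{2^i} + x^{2^{i+1}}`,
so `Sq` telescopes `∑_{i<n} x_j^{2^i}` to `x_j + x_j^{2^n}`. Hence for
`g = ∏_{j∈S} (∑_{i<n} x_j^{2^i}) · x^b` the degree-`n` part of `Sq g` is `x_S` times the top
component of `Sq (x^b)`, which is `(x^b)²`. On the other hand every monomial of `g` has degree
`∑_{j∈S} 2^{t_j} + deg b`, and this equals `n` only if `n = ∑_{j∈S} (2^{t_j+1} - 1)`, which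
`μ(n) > k ≥ |S|` forbids. So the degree-`n` part of `Sq g` is a sum of degree-`n` parts of `Sq`
of homogeneous polynomials of degree `≠ n`: those of lower degree are hit by definition, and
those of higher degree contribute nothing.
-/

theorem Finsupp.eq_sum_single_odd_add_two_nsmul {σ : Type*} (a : σ →₀ ℕ) :
    a = ∑ j ∈ a.support.filter (fun j => Odd (a j)), Finsupp.single j 1
      + 2 • a.mapRange (· / 2) (Nat.zero_div 2) := by
  classical
  ext j
  simp only [Finsupp.add_apply, Finsupp.finsetSum_apply, Finsupp.single_apply, Finset.sum_ite_eq',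
    Finset.mem_filter, Finsupp.mem_support_iff, Finsupp.coe_smul, Pi.smul_apply,
    Finsupp.mapRange_apply, smul_eq_mul]
  split_ifs with h
  · have := Nat.odd_iff.mp h.2
    omega
  · have : a j % 2 = 0 := by
      by_contra h'
      exact h ⟨by omega, Nat.odd_iff.mpr (by omega)⟩
    omega

theorem mu_le_card_of_sum_two_pow {ι : Type*} [Fintype ι] (u : ι → ℕ) (hu : ∀ i, 0 < u i)
    {n : ℕ} (h : n + Fintype.card ι = ∑ i, 2 ^ u i) : mu n ≤ Fintype.card ι := by
  let e := Fintype.equivFin ι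
  refine Nat.sInf_le ⟨u ∘ e.symm, fun i => hu _, ?_⟩
  simp only [Function.comp_apply]
  rw [Equiv.sum_comp e.symm (fun i => 2 ^ u i - 1), Finset.sum_tsub_distrib _
    fun i _ => Nat.one_le_two_pow]
  simp only [Finset.sum_const, Finset.card_univ, smul_eq_mul, mul_one]
  omega

namespace MvPolynomial

variable {σ τ R : Type*} [CommSemiring R]

attribute [local instance] gradedAlgebra in
theorem homogeneousComponent_isHomogeneous_mul {a : MvPolynomial σ R} {i : ℕ}
    (ha : a.IsHomogeneous i) (b : MvPolynomial σ R) (n : ℕ) :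
    homogeneousComponent n (a * b) = if i ≤ n then a * homogeneousComponent (n - i) b else 0 := by
  simp only [← decomposition.decompose'_apply]
  exact DirectSum.coe_decompose_mul_of_left_mem (homogeneousSubmodule σ R) n ha

theorem homogeneousComponent_mul_of_totalDegree_le {p q : MvPolynomial σ R} {d e : ℕ}
    (hp : p.totalDegree ≤ d) (hq : q.totalDegree ≤ e) :
    homogeneousComponent (d + e) (p * q) = homogeneousComponent d p * homogeneousComponent e q := by
  conv_lhs => rw [← sum_homogeneousComponent p]
  rw [Finset.sum_mul, map_sum, Finset.sum_eq_single d]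
  · rw [homogeneousComponent_isHomogeneous_mul (homogeneousComponent_isHomogeneous d p),
      if_pos (by omega), Nat.add_sub_cancel_left]
  · intro i hi hid
    have hlt : i < d := by rw [Finset.mem_range] at hi; omega
    rw [homogeneousComponent_isHomogeneous_mul (homogeneousComponent_isHomogeneous i p),
      if_pos (by omega), homogeneousComponent_eq_zero _ q (by omega), mul_zero]
  · intro hd
    rw [homogeneousComponent_eq_zero _ p (by rw [Finset.mem_range] at hd; omega), zero_mul,
      map_zero]

theorem homogeneousComponent_prod_of_totalDegree_le {ι : Type*} (s : Finset ι)
    (p : ι → MvPolynomial σ R) (d : ι → ℕ) (h : ∀ i ∈ s, (p i).totalDegree ≤ d i) :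
    homogeneousComponent (∑ i ∈ s, d i) (∏ i ∈ s, p i)
      = ∏ i ∈ s, homogeneousComponent (d i) (p i) := by
  induction s using Finset.cons_induction with
  | empty => simp
  | cons a s ha ih =>
    rw [Finset.forall_mem_cons] at h
    have hs : (∏ i ∈ s, p i).totalDegree ≤ ∑ i ∈ s, d i :=
      (totalDegree_finsetProd _ _).trans (Finset.sum_le_sum h.2)
    rw [Finset.sum_cons, Finset.prod_cons, Finset.prod_cons,
      homogeneousComponent_mul_of_totalDegree_le h.1 hs, ih h.2]

theorem homogeneousComponent_pow_of_totalDegree_le {p : MvPolynomial σ R} {d : ℕ}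
    (hp : p.totalDegree ≤ d) (c : ℕ) :
    homogeneousComponent (c * d) (p ^ c) = homogeneousComponent d p ^ c := by
  simpa using homogeneousComponent_prod_of_totalDegree_le (Finset.range c) (fun _ => p)
    (fun _ => d) (fun _ _ => hp)

theorem homogeneousComponent_aeval_monomial (φ : σ → MvPolynomial τ R) {e : ℕ}
    (hφ : ∀ j, (φ j).totalDegree ≤ e) (c : σ →₀ ℕ) :
    homogeneousComponent (e * c.degree) (aeval φ (monomial c (1 : R)))
      = aeval (fun j => homogeneousComponent e (φ j)) (monomial c (1 : R)) := by
  simp only [aeval_monomial, map_one, one_mul, Finsupp.prod, Finsupp.degree_apply, Finset.mul_sum]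
  simp_rw [mul_comm e]
  rw [homogeneousComponent_prod_of_totalDegree_le _ _ _
    fun j _ => (totalDegree_pow _ _).trans (Nat.mul_le_mul_left _ (hφ j))]
  exact Finset.prod_congr rfl fun j _ => homogeneousComponent_pow_of_totalDegree_le (hφ j) _

end MvPolynomial

section

variable {k : ℕ}

theorem SqTotal_X (j : Fin k) : SqTotal k (X j) = X j + X j ^ 2 := aeval_X _ _

theorem SqTotal_monomial (c : Fin k →₀ ℕ) (r : ZMod 2) :
    SqTotal k (monomial c r)
      = monomial c r * aeval (fun j => 1 + X j) (monomial c (1 : ZMod 2)) := by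
  have hX : (fun j : Fin k => (X j + X j ^ 2 : P k)) = fun j => X j * (1 + X j) := by
    ext1 j; ring
  rw [SqTotal, hX, aeval_monomial, aeval_monomial, monomial_eq]
  simp only [mul_pow, Finsupp.prod_mul, algebraMap_eq, map_one, one_mul]
  ring

theorem homogeneousComponent_SqTotal_eq_zero {f : P k} {i n : ℕ} (hf : f.IsHomogeneous i)
    (h : n < i) : homogeneousComponent n (SqTotal k f) = 0 := by
  rw [f.as_sum, map_sum, map_sum]
  refine Finset.sum_eq_zero fun c hc => ?_
  have hdeg : c.degree = i := (hf.degree_eq_sum_deg_support hc).symm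
  rw [SqTotal_monomial, homogeneousComponent_isHomogeneous_mul (isHomogeneous_monomial _ hdeg),
    if_neg (by omega)]

theorem homogeneousComponent_SqTotal_mem_hitSubmodule {f : P k} {i n : ℕ}
    (hf : f.IsHomogeneous i) (hi : i ≠ n) :
    homogeneousComponent n (SqTotal k f) ∈ hitSubmodule k n := by
  rcases hi.lt_or_gt with hlt | hgt
  · exact Submodule.subset_span ⟨i, hlt, f, hf, rfl⟩
  · rw [homogeneousComponent_SqTotal_eq_zero hf hgt]
    exact zero_mem _

theorem SqTotal_sum_X_pow_two_pow (j : Fin k) (N : ℕ) :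
    SqTotal k (∑ i ∈ Finset.range N, X j ^ 2 ^ i) = X j + X j ^ 2 ^ N := by
  have hterm : ∀ i, SqTotal k (X j ^ 2 ^ i) = X j ^ 2 ^ (i + 1) - X j ^ 2 ^ i := fun i => by
    rw [map_pow, SqTotal_X, add_pow_char_pow, CharTwo.sub_eq_add, add_comm, ← pow_mul,
      ← pow_succ']
  rw [map_sum, Finset.sum_congr rfl fun i _ => hterm i, Finset.sum_range_sub (X j ^ 2 ^ ·),
    pow_zero, pow_one, CharTwo.sub_eq_add, add_comm]

theorem homogeneousComponent_SqTotal_monomial (b : Fin k →₀ ℕ) :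
    homogeneousComponent (2 * b.degree) (SqTotal k (monomial b 1)) = monomial b 1 ^ 2 := by
  have htop : ∀ j : Fin k, homogeneousComponent 2 (X j + X j ^ 2 : P k) = X j ^ 2 := fun j => by
    rw [map_add, homogeneousComponent_of_mem (isHomogeneous_X _ j), if_neg (by norm_num),
      homogeneousComponent_of_mem (isHomogeneous_X_pow j 2), if_pos rfl, zero_add]
  have hdeg : ∀ j : Fin k, (X j + X j ^ 2 : P k).totalDegree ≤ 2 := fun j =>
    (totalDegree_add _ _).trans (by simp [totalDegree_X_pow])
  rw [SqTotal, homogeneousComponent_aeval_monomial _ hdeg, funext htop, aeval_monomial,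
    monomial_eq, map_one, map_one, one_mul, one_mul, Finsupp.prod,
    Finsupp.prod, ← Finset.prod_pow]
  simp only [← pow_mul, mul_comm]

noncomputable def hitWitness (S : Finset (Fin k)) (b : Fin k →₀ ℕ) (N : ℕ) : P k :=
  (∏ j ∈ S, ∑ i ∈ Finset.range N, X j ^ 2 ^ i) * monomial b 1

theorem homogeneousComponent_SqTotal_hitWitness (S : Finset (Fin k)) (b : Fin k →₀ ℕ) {n : ℕ}
    (hn : n = S.card + 2 * b.degree) :
    homogeneousComponent n (SqTotal k (hitWitness S b n))
      = (∏ j ∈ S, X j) * monomial b 1 ^ 2 := by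
  classical
  have hX : ∀ T : Finset (Fin k), (∏ j ∈ T, X j : P k).IsHomogeneous T.card := fun T => by
    simpa using IsHomogeneous.prod T (fun j => (X j : P k)) (fun _ => 1)
      fun j _ => isHomogeneous_X _ j
  rw [hitWitness, map_mul, map_prod,
    Finset.prod_congr rfl fun j _ => SqTotal_sum_X_pow_two_pow j n, Finset.prod_add,
    Finset.sum_mul, map_sum, Finset.sum_eq_single_of_mem S (Finset.mem_powerset_self S)]
  · rw [Finset.sdiff_self, Finset.prod_empty, mul_one,
      homogeneousComponent_isHomogeneous_mul (hX S), if_pos (by omega),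
      show n - S.card = 2 * b.degree by omega, homogeneousComponent_SqTotal_monomial]
  · intro T hT hTS
    obtain ⟨j, hj⟩ : (S \ T).Nonempty := Finset.sdiff_nonempty.mpr fun hST =>
      hTS (Finset.Subset.antisymm (Finset.mem_powerset.mp hT) hST)
    have hhigh : (∏ j ∈ S \ T, X j ^ 2 ^ n : P k).IsHomogeneous (∑ j ∈ S \ T, 2 ^ n) :=
      IsHomogeneous.prod _ _ _ fun j _ => isHomogeneous_X_pow j _
    have hlt : n < ∑ j ∈ S \ T, 2 ^ n :=
      n.lt_two_pow_self.trans_le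
        (Finset.single_le_sum (f := fun _ => 2 ^ n) (fun _ _ => Nat.zero_le _) hj)
    rw [homogeneousComponent_isHomogeneous_mul ((hX T).mul hhigh), if_neg (by omega)]

theorem homogeneousComponent_SqTotal_hitWitness_mem_hitSubmodule (S : Finset (Fin k))
    (b : Fin k →₀ ℕ) {n : ℕ} (hn : n = S.card + 2 * b.degree) (h : S.card < mu n) :
    homogeneousComponent n (SqTotal k (hitWitness S b n)) ∈ hitSubmodule k n := by
  classical
  rw [hitWitness, ← Finset.prod_coe_sort S, Finset.prod_univ_sum, Finset.sum_mul, map_sum,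
    map_sum]
  refine Submodule.sum_mem _ fun t _ => homogeneousComponent_SqTotal_mem_hitSubmodule
    ((IsHomogeneous.prod _ _ (fun j => 2 ^ t j) fun j _ => isHomogeneous_X_pow _ _).mul
      (isHomogeneous_monomial _ rfl)) fun hdeg => ?_
  have hmu : mu n ≤ Fintype.card S := by
    refine mu_le_card_of_sum_two_pow (fun j => t j + 1) (fun _ => Nat.succ_pos _) ?_
    simp only [pow_succ, ← Finset.sum_mul, Fintype.card_coe]
    omega
  rw [Fintype.card_coe] at hmu
  omega

theorem prod_X_mul_monomial_sq_mem_hitSubmodule (S : Finset (Fin k)) (b : Fin k →₀ ℕ) {n : ℕ}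
    (hn : n = S.card + 2 * b.degree) (h : S.card < mu n) :
    (∏ j ∈ S, X j) * monomial b 1 ^ 2 ∈ hitSubmodule k n := by
  rw [← homogeneousComponent_SqTotal_hitWitness S b hn]
  exact homogeneousComponent_SqTotal_hitWitness_mem_hitSubmodule S b hn h

theorem monomial_mem_hitSubmodule {a : Fin k →₀ ℕ} (h : k < mu a.degree) :
    monomial a 1 ∈ hitSubmodule k a.degree := by
  set S := a.support.filter fun j => Odd (a j)
  set b := a.mapRange (· / 2) (Nat.zero_div 2)
  have ha : a = ∑ j ∈ S, Finsupp.single j 1 + 2 • b := Finsupp.eq_sum_single_odd_add_two_nsmul a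
  have hdeg : a.degree = S.card + 2 * b.degree := by
    conv_lhs => rw [ha]
    simp [map_sum]
  have hmono : (monomial a 1 : P k) = (∏ j ∈ S, X j) * monomial b 1 ^ 2 := by
    rw [monomial_pow, one_pow,
      show (∏ j ∈ S, X j : P k) = monomial (∑ j ∈ S, Finsupp.single j 1) 1 from
        (monomial_sum_one S _).symm,
      monomial_mul, one_mul, ← ha]
  rw [hmono]
  exact prod_X_mul_monomial_sq_mem_hitSubmodule S b hdeg
    ((S.card_le_univ.trans_eq (Fintype.card_fin k)).trans_lt h)

theorem homogeneousSubmodule_le_hitSubmodule {n : ℕ} (h : k < mu n) :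
    homogeneousSubmodule (Fin k) (ZMod 2) n ≤ hitSubmodule k n := by
  rw [homogeneousSubmodule_eq_finsupp_supported, AddMonoidAlgebra.supported_eq_span_single,
    Submodule.span_le]
  rintro _ ⟨a, rfl : a.degree = n, rfl⟩
  exact monomial_mem_hitSubmodule h

attribute [local instance] gradedAlgebra in
theorem hitTotal_eq_top {n : ℕ} (h : k < mu n) : hitTotal k n = ⊤ := by
  rw [eq_top_iff, ← (DirectSum.Decomposition.isInternal
    (homogeneousSubmodule (Fin k) (ZMod 2))).submodule_iSup_eq_top, iSup_le_iff]
  intro m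
  rcases eq_or_ne m n with rfl | hm
  · exact (homogeneousSubmodule_le_hitSubmodule h).trans le_sup_left
  · exact le_sup_of_le_right
      (le_iSup₂ (f := fun m (_ : m ≠ n) => homogeneousSubmodule (Fin k) (ZMod 2) m) m hm)

end

theorem statement0_general (k n : ℕ) (h : k < mu n) :
    (∀ f ∈ homogeneousSubmodule (Fin k) (ZMod 2) n, f ∈ hitSubmodule k n) ∧
    Subsingleton (QP k n) :=
  ⟨fun _ hf => homogeneousSubmodule_le_hitSubmodule h hf,
    Submodule.Quotient.subsingleton_iff.mpr (hitTotal_eq_top h)⟩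

/-- Wood's theorem / Peterson conjecture. If `μ(n) > k`, then every
homogeneous polynomial of degree `n` in `P_k` is hit; equivalently, the cohit space
`(QP_k)_n` is the zero vector space. -/
theorem statement0 (k n : ℕ) (hk : 1 ≤ k) (hn : 1 ≤ n) (h : k < mu n) :
    (∀ f ∈ homogeneousSubmodule (Fin k) (ZMod 2) n, f ∈ hitSubmodule k n) ∧
    Subsingleton (QP k n) :=
  statement0_general k n h
end

section
/- For every k ≥ 1 and every n ≥ 0, the cohit space (QP_k)_n is the internal direct sum of (QP_k^0)_n and (QP_k^+)_n; that is, the images in (QP_k)_n of the degree-n homogeneous parts of P_k^0 and of P_k^+ have trivial intersection and together span (QP_k)_n. -/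
open MvPolynomial

/-!
`Sq` multiplies a monomial `x^a` by a polynomial in the variables of `x^a` with constant
term `1`, so every monomial of `Sq (x^a)` involves exactly the variables of `x^a`. Hence the
projection `piPlus` onto `P_k^+` along `P_k^0` commutes with `Sq` and with taking homogeneous
components, so it preserves the hit subspace and descends to the cohit space, where it
splits `(QP_k)_n` as `(QP_k^0)_n ⊕ (QP_k^+)_n`.
-/

theorem disjoint_map_mkQ_of_proj {R M : Type*} [Ring R] [AddCommGroup M] [Module R M]
    {N A B : Submodule R M} (f : M →ₗ[R] M) (hN : N ≤ N.comap f)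
    (hA : A ≤ LinearMap.ker f) (hB : ∀ b ∈ B, f b = b) :
    Disjoint (A.map N.mkQ) (B.map N.mkQ) := by
  rw [Submodule.disjoint_def]
  rintro _ ⟨a, ha, rfl⟩ ⟨b, hb, hba⟩
  have hfba : f (b - a) = b := by rw [map_sub, hB b hb, hA ha, sub_zero]
  have hbN : b ∈ N := hfba ▸ hN ((Submodule.Quotient.eq N).mp hba)
  rw [← hba]
  exact (Submodule.Quotient.mk_eq_zero N).mpr hbN

section

variable {k : ℕ}

theorem SqTotal_monomial_one (a : Fin k →₀ ℕ) :
    SqTotal k (monomial a 1) = monomial a 1 * ∏ j ∈ a.support, (1 + X j) ^ a j := by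
  rw [SqTotal, aeval_monomial, monomial_eq, map_one, one_mul, C_1, one_mul, Finsupp.prod,
    Finsupp.prod, ← Finset.prod_mul_distrib]
  refine Finset.prod_congr rfl fun j _ => ?_
  rw [← mul_pow]
  ring

theorem vars_SqTotal_subset (p : P k) : (SqTotal k p).vars ⊆ p.vars := by
  intro j hj
  rw [SqTotal, aeval_eq_bind₁] at hj
  obtain ⟨i, hi, hji⟩ := mem_vars_bind₁ _ _ hj
  have hvars : (X i + X i ^ 2 : P k).vars ⊆ {i} := by
    refine (vars_add_subset _ _).trans (Finset.union_subset ?_ ((vars_pow _ _).trans ?_)) <;>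
      simp [vars_X]
  rwa [Finset.mem_singleton.mp (hvars hji)]

theorem support_eq_of_mem_support_SqTotal_monomial {a b : Fin k →₀ ℕ}
    (hb : b ∈ (SqTotal k (monomial a 1)).support) : b.support = a.support := by
  have hab : a ≤ b := by
    by_contra hab
    rw [mem_support_iff, SqTotal_monomial_one, coeff_monomial_mul', if_neg hab] at hb
    exact hb rfl
  refine subset_antisymm (fun j hj => ?_) (Finsupp.support_mono hab)
  have hjvars : j ∈ (SqTotal k (monomial a 1)).vars :=
    (mem_vars_iff_mem_support _).mpr ⟨b, hb, hj⟩
  simpa [vars_monomial one_ne_zero] using vars_SqTotal_subset _ hjvars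

theorem SqTotal_monomial_mem_restrictSupport {a : Fin k →₀ ℕ} {s : Set (Fin k →₀ ℕ)}
    (hs : ∀ b : Fin k →₀ ℕ, b.support = a.support → b ∈ s) :
    SqTotal k (monomial a 1) ∈ restrictSupport (ZMod 2) s :=
  fun _ hb => hs _ (support_eq_of_mem_support_SqTotal_monomial hb)

theorem P0_eq_restrictSupport : P0 k = restrictSupport (ZMod 2) {a | ∃ j, a j = 0} := by
  rw [restrictSupport_eq_span, P0]
  congr 1
  ext f
  simp [eq_comm]

theorem Pplus_eq_restrictSupport : Pplus k = restrictSupport (ZMod 2) {a | ∀ j, a j ≠ 0} := by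
  rw [restrictSupport_eq_span, Pplus]
  congr 1
  ext f
  simp [eq_comm]

noncomputable def piPlus (k : ℕ) : P k →ₗ[ZMod 2] P k :=
  (basisMonomials (Fin k) (ZMod 2)).constr (ZMod 2) fun a =>
    if ∀ j, a j ≠ 0 then monomial a 1 else 0

theorem piPlus_monomial_one (a : Fin k →₀ ℕ) :
    piPlus k (monomial a 1) = if ∀ j, a j ≠ 0 then monomial a 1 else 0 :=
  (basisMonomials (Fin k) (ZMod 2)).constr_basis (ZMod 2) _ a

theorem coeff_piPlus (b : Fin k →₀ ℕ) (p : P k) :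
    coeff b (piPlus k p) = if ∀ j, b j ≠ 0 then coeff b p else 0 := by
  induction p using MvPolynomial.induction_on' with
  | monomial a c =>
    rw [← mul_one c, ← smul_eq_mul, ← smul_monomial, map_smul, piPlus_monomial_one]
    by_cases hab : a = b
    · subst hab; split_ifs <;> simp
    · split_ifs <;> simp [coeff_monomial, hab]
  | add p q hp hq => rw [map_add, coeff_add, coeff_add, hp, hq]; split_ifs <;> simp

theorem piPlus_eq_zero_of_mem_P0 {p : P k} (hp : p ∈ P0 k) : piPlus k p = 0 := by
  rw [P0_eq_restrictSupport, mem_restrictSupport_iff] at hp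
  ext b
  rw [coeff_piPlus, coeff_zero]
  split_ifs with hb
  · by_contra h
    obtain ⟨j, hj⟩ := hp (mem_support_iff.mpr h)
    exact hb j hj
  · rfl

theorem piPlus_eq_self_of_mem_Pplus {p : P k} (hp : p ∈ Pplus k) : piPlus k p = p := by
  rw [Pplus_eq_restrictSupport, mem_restrictSupport_iff] at hp
  ext b
  rw [coeff_piPlus]
  split_ifs with hb
  · rfl
  · by_contra h
    exact hb (hp (mem_support_iff.mpr (Ne.symm h)))

theorem piPlus_mem_Pplus (p : P k) : piPlus k p ∈ Pplus k := by
  rw [Pplus_eq_restrictSupport, mem_restrictSupport_iff]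
  intro b hb
  rw [Finset.mem_coe, mem_support_iff, coeff_piPlus] at hb
  by_contra h
  exact hb (if_neg h)

theorem sub_piPlus_mem_P0 (p : P k) : p - piPlus k p ∈ P0 k := by
  rw [P0_eq_restrictSupport, mem_restrictSupport_iff]
  intro b hb
  rw [Finset.mem_coe, mem_support_iff, coeff_sub, coeff_piPlus] at hb
  by_contra h
  simp only [Set.mem_ofPred_eq, not_exists] at h
  exact hb (by rw [if_pos h, sub_self])

theorem piPlus_homogeneousComponent (n : ℕ) (p : P k) :
    piPlus k (homogeneousComponent n p) = homogeneousComponent n (piPlus k p) := by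
  ext b
  simp only [coeff_piPlus, coeff_homogeneousComponent]
  split_ifs <;> rfl

theorem piPlus_mem_homogeneousSubmodule {n : ℕ} {p : P k}
    (hp : p ∈ homogeneousSubmodule (Fin k) (ZMod 2) n) :
    piPlus k p ∈ homogeneousSubmodule (Fin k) (ZMod 2) n := by
  rw [← homogeneousComponent_eq_self hp, piPlus_homogeneousComponent]
  exact homogeneousComponent_mem n _

theorem piPlus_SqTotal (p : P k) : piPlus k (SqTotal k p) = SqTotal k (piPlus k p) := by
  suffices piPlus k ∘ₗ (SqTotal k).toLinearMap = (SqTotal k).toLinearMap ∘ₗ piPlus k from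
    LinearMap.congr_fun this p
  refine (basisMonomials (Fin k) (ZMod 2)).ext fun a => ?_
  simp only [LinearMap.comp_apply, coe_basisMonomials, AlgHom.toLinearMap_apply,
    piPlus_monomial_one]
  split_ifs with ha
  · refine piPlus_eq_self_of_mem_Pplus ?_
    rw [Pplus_eq_restrictSupport]
    refine SqTotal_monomial_mem_restrictSupport fun b hb j => ?_
    rw [← Finsupp.mem_support_iff, hb, Finsupp.mem_support_iff]
    exact ha j
  · rw [map_zero]
    refine piPlus_eq_zero_of_mem_P0 ?_
    rw [P0_eq_restrictSupport]
    refine SqTotal_monomial_mem_restrictSupport fun b hb => ?_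
    push Not at ha
    obtain ⟨j, hj⟩ := ha
    refine ⟨j, ?_⟩
    rwa [← Finsupp.notMem_support_iff, hb, Finsupp.notMem_support_iff]

theorem mem_offDegree_iff {n : ℕ} {p : P k} :
    p ∈ offDegree k n ↔ homogeneousComponent n p = 0 := by
  have hle : offDegree k n ≤ LinearMap.ker (homogeneousComponent n) :=
    iSup₂_le fun m hm p hp => by
      rw [LinearMap.mem_ker, homogeneousComponent_of_mem hp, if_neg (Ne.symm hm)]
  refine ⟨fun hp => hle hp, fun hp => ?_⟩
  rw [← sum_homogeneousComponent p]
  refine Submodule.sum_mem _ fun m _ => ?_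
  by_cases hm : m = n
  · rw [hm, hp]
    exact zero_mem _
  · exact (le_iSup₂_of_le m hm le_rfl : homogeneousSubmodule _ _ m ≤ offDegree k n)
      (homogeneousComponent_mem m p)

theorem mkQ_homogeneousComponent (n : ℕ) (p : P k) :
    (hitTotal k n).mkQ (homogeneousComponent n p) = (hitTotal k n).mkQ p := by
  rw [Submodule.mkQ_apply, Submodule.mkQ_apply, Submodule.Quotient.eq]
  refine Submodule.mem_sup_right (mem_offDegree_iff.mpr ?_)
  rw [map_sub, homogeneousComponent_eq_self (homogeneousComponent_mem n p), sub_self]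

theorem hitTotal_le_comap_piPlus (n : ℕ) : hitTotal k n ≤ (hitTotal k n).comap (piPlus k) := by
  refine sup_le ?_ ?_
  · refine le_trans ?_ (Submodule.comap_mono le_sup_left)
    refine Submodule.span_le.mpr ?_
    rintro _ ⟨m, hm, g, hg, rfl⟩
    rw [SetLike.mem_coe, Submodule.mem_comap, piPlus_homogeneousComponent, piPlus_SqTotal]
    exact Submodule.subset_span ⟨m, hm, piPlus k g, piPlus_mem_homogeneousSubmodule hg, rfl⟩
  · refine le_trans ?_ (Submodule.comap_mono le_sup_right)
    intro p hp
    rw [Submodule.mem_comap, mem_offDegree_iff, ← piPlus_homogeneousComponent,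
      mem_offDegree_iff.mp hp, map_zero]

end

theorem statement3_general (k n : ℕ) :
    Q0 k n ⊓ Qplus k n = ⊥ ∧ Q0 k n ⊔ Qplus k n = ⊤ := by
  refine ⟨Disjoint.eq_bot (disjoint_map_mkQ_of_proj (piPlus k) (hitTotal_le_comap_piPlus n)
    (fun p hp => piPlus_eq_zero_of_mem_P0 hp.1)
    (fun p hp => piPlus_eq_self_of_mem_Pplus hp.1)), eq_top_iff.mpr ?_⟩
  rintro x -
  obtain ⟨p, rfl⟩ := (hitTotal k n).mkQ_surjective x
  have hq := homogeneousComponent_mem n p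
  rw [← mkQ_homogeneousComponent, ← sub_add_cancel (homogeneousComponent n p)
    (piPlus k (homogeneousComponent n p)), map_add]
  exact Submodule.add_mem_sup
    ⟨_, ⟨sub_piPlus_mem_P0 _, sub_mem hq (piPlus_mem_homogeneousSubmodule hq)⟩, rfl⟩
    ⟨_, ⟨piPlus_mem_Pplus _, piPlus_mem_homogeneousSubmodule hq⟩, rfl⟩

/-- The cohit space `(QP_k)_n` is the internal direct sum of
`(QP_k^0)_n` and `(QP_k^+)_n`. -/
theorem statement3 (k n : ℕ) (hk : 1 ≤ k) :
    Q0 k n ⊓ Qplus k n = ⊥ ∧ Q0 k n ⊔ Qplus k n = ⊤ :=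
  statement3_general k n
end
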